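/- arXiv:1512.01853 — 6 statements merged into one kernel-verified Lean document; each statement's English description precedes it below -/
import Mathlib

section
/- Let S ⊆ ℝ^k be a semialgebraic set, i.e. a finite union S = H₁ ∪ … ∪ H_m where each Hᵢ = {x ∈ ℝ^k : p(x) > 0 for all p ∈ Pᵢ, and h(x) = 0 for all h ∈ Qᵢ} for finite sets Pᵢ, Qᵢ of real polynomials in k variables. Then the interior of the closure of S is contained in the closure of the interior of S: int(cl S) ⊆ cl(int S). -/
open MvPolynomial Set

/-- The zero set of a nonzero real polynomial has empty interior. -/
lemma zero_set_interior_empty {k : ℕ} {q : MvPolynomial (Fin k) ℝ} (hq : q ≠ 0) :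
    interior {x : Fin k → ℝ | MvPolynomial.eval x q = 0} = ∅ := by
  by_contra h
  obtain ⟨x, hx⟩ := Set.nonempty_iff_ne_empty.mpr h
  have hA : AnalyticOnNhd ℝ (fun y : Fin k → ℝ => MvPolynomial.eval y q) Set.univ :=
    AnalyticOnNhd.eval_mvPolynomial q
  have hev : (fun y : Fin k → ℝ => MvPolynomial.eval y q) =ᶠ[nhds x] 0 := by
    filter_upwards [isOpen_interior.mem_nhds hx] with y hy
    simpa using interior_subset hy
  have := hA.eqOn_zero_of_preconnected_of_eventuallyEq_zero
    isPreconnected_univ (Set.mem_univ x) hev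
  apply hq
  apply MvPolynomial.funext (q := 0)
  intro y
  simpa using this (Set.mem_univ y)

/-- For a semialgebraic set `S ⊆ ℝ^k`, presented as a finite union of basic sets cut out by
finitely many strict polynomial inequalities and polynomial equalities, the interior of the
closure of `S` is contained in the closure of the interior of `S`. -/
theorem interior_closure_subset_closure_interior (k m : ℕ)
    (P Q : Fin m → Finset (MvPolynomial (Fin k) ℝ))
    (S : Set (Fin k → ℝ))
    (hS : S = ⋃ i : Fin m,
      {x : Fin k → ℝ | (∀ p ∈ P i, 0 < MvPolynomial.eval x p) ∧
        (∀ h ∈ Q i, MvPolynomial.eval x h = 0)}) :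
    interior (closure S) ⊆ closure (interior S) := by
  classical
  set H : Fin m → Set (Fin k → ℝ) := fun i =>
    {x : Fin k → ℝ | (∀ p ∈ P i, 0 < MvPolynomial.eval x p) ∧
        (∀ h ∈ Q i, MvPolynomial.eval x h = 0)} with hH
  set A : Set (Fin k → ℝ) := ⋃ i ∈ {i : Fin m | ∀ q ∈ Q i, q = 0}, H i with hA
  -- the union of the zero sets of all nonzero polynomials appearing in some `Q i`
  set B : Finset (MvPolynomial (Fin k) ℝ) :=
    (Finset.univ.biUnion Q).filter (· ≠ 0) with hB
  set N : Set (Fin k → ℝ) := ⋃ q ∈ B, {x | MvPolynomial.eval x q = 0} with hN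
  have hZclosed : ∀ q : MvPolynomial (Fin k) ℝ,
      IsClosed {x : Fin k → ℝ | MvPolynomial.eval x q = 0} := fun q =>
    isClosed_eq (MvPolynomial.continuous_eval q) continuous_const
  -- A is open
  have hAopen : IsOpen A := by
    apply isOpen_biUnion
    intro i hi
    have hHi : H i = ⋂ p ∈ P i, {x : Fin k → ℝ | 0 < MvPolynomial.eval x p} := by
      ext x
      simp only [hH, Set.mem_setOf_eq, Set.mem_iInter]
      constructor
      · exact fun h p hp => h.1 p hp
      · intro h
        refine ⟨h, fun q hq => ?_⟩
        rw [hi q hq]; simp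
    rw [hHi]
    exact isOpen_biInter_finset fun p _ =>
      isOpen_lt continuous_const (MvPolynomial.continuous_eval p)
  -- A ⊆ S
  have hAS : A ⊆ S := by
    rw [hS]
    exact Set.iUnion₂_subset fun i _ => Set.subset_iUnion _ i
  -- S ⊆ A ∪ N
  have hSAN : S ⊆ A ∪ N := by
    rw [hS]
    intro x hx
    obtain ⟨i, hi⟩ := Set.mem_iUnion.mp hx
    by_cases hgood : ∀ q ∈ Q i, q = 0
    · exact Or.inl (Set.mem_biUnion hgood hi)
    · push_neg at hgood
      obtain ⟨q, hqQ, hq0⟩ := hgood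
      refine Or.inr (Set.mem_biUnion ?_ (hi.2 q hqQ))
      refine Finset.mem_filter.mpr ⟨?_, hq0⟩
      exact Finset.mem_biUnion.mpr ⟨i, Finset.mem_univ i, hqQ⟩
  -- N is closed with dense complement
  have hNclosed : IsClosed N :=
    Set.Finite.isClosed_biUnion B.finite_toSet fun q _ => hZclosed q
  have hNcdense : Dense Nᶜ := by
    rw [hN, Set.compl_iUnion₂]
    apply dense_biInter_of_isOpen
    · exact fun q _ => (hZclosed q).isOpen_compl
    · exact B.finite_toSet.countable
    · intro q hq
      have hq0 : q ≠ 0 := (Finset.mem_filter.mp (Finset.mem_coe.mp hq)).2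
      exact interior_eq_empty_iff_dense_compl.mp (zero_set_interior_empty hq0)
  -- closure S ⊆ closure A ∪ N
  have h1 : closure S ⊆ closure A ∪ N := by
    calc closure S ⊆ closure (A ∪ N) := closure_mono hSAN
      _ = closure A ∪ closure N := closure_union
      _ = closure A ∪ N := by rw [hNclosed.closure_eq]
  -- conclude
  have h2 : interior (closure S) ⊆ closure (interior (closure S) ∩ Nᶜ) :=
    hNcdense.open_subset_closure_inter isOpen_interior
  have h3 : interior (closure S) ∩ Nᶜ ⊆ closure A := fun y hy =>
    (h1 (interior_subset hy.1)).resolve_right hy.2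
  intro x hx
  have : x ∈ closure (closure A) := closure_mono h3 (h2 hx)
  rw [closure_closure] at this
  have hAint : A ⊆ interior S := hAopen.subset_interior_iff.mpr hAS
  exact closure_mono hAint this
end

section
/- For every real number λ with λ ≠ −1/2, the Hesse cubic f_λ = x³ + y³ + z³ + 6λ·xyz has real rank at most 4; explicitly, f_λ = c₀(x+y+z)³ + c₁((1+λ)x − λy − λz)³ + c₂(−λx + (1+λ)y − λz)³ + c₃(−λx − λy + (1+λ)z)³, where c₀ = λ(λ²+λ+1)/(2λ+1)² and c₁ = c₂ = c₃ = 1/(2λ+1)². -/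
open MvPolynomial

/-- The real (symmetric) rank of a polynomial `f` in `n` variables with respect to
`d`-th powers of real linear forms: the least `k` such that
`f = ∑ j, λⱼ • lⱼ ^ d` with `λⱼ ∈ ℝ` and `lⱼ` real linear forms. -/
noncomputable def realRank (n d : ℕ) (f : MvPolynomial (Fin n) ℝ) : ℕ :=
  sInf {k | ∃ (lam : Fin k → ℝ) (l : Fin k → Fin n → ℝ),
    f = ∑ j, MvPolynomial.C (lam j) * (∑ i, MvPolynomial.C (l j i) * MvPolynomial.X i) ^ d}

/-- Exponent vectors of monomials of degree `d` in `n` variables. -/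
abbrev Mon (n d : ℕ) := {e : Fin n → Fin (d + 1) // ∑ i, (e i : ℕ) = d}

/-- Coefficient space of degree-`d` forms in `n` variables, with its
Euclidean (product) topology. -/
abbrev Coef (n d : ℕ) := Mon n d → ℝ

/-- The degree-`d` form whose coefficients are given by `c`. -/
noncomputable def toForm (n d : ℕ) (c : Coef n d) : MvPolynomial (Fin n) ℝ :=
  ∑ e : Mon n d, MvPolynomial.C (c e) * ∏ i, MvPolynomial.X i ^ ((e.1 i : ℕ))

/-- `r` is a typical rank for degree-`d` forms in `n` variables. -/
def IsTypicalRank (n d r : ℕ) : Prop :=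
  (interior {c : Coef n d | realRank n d (toForm n d c) = r}).Nonempty

lemma hesse_key (l : ℝ) :
    (C ((2 * l + 1) ^ 2) : MvPolynomial (Fin 3) ℝ) *
      (X 0 ^ 3 + X 1 ^ 3 + X 2 ^ 3 + C (6 * l) * (X 0 * X 1 * X 2)) =
      C (l * (l ^ 2 + l + 1)) * (X 0 + X 1 + X 2) ^ 3
    + (C (1 + l) * X 0 - C l * X 1 - C l * X 2) ^ 3
    + (- C l * X 0 + C (1 + l) * X 1 - C l * X 2) ^ 3
    + (- C l * X 0 - C l * X 1 + C (1 + l) * X 2) ^ 3 := by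
  simp only [map_mul, map_add, map_pow, map_ofNat, map_one]
  ring

/-- The Hesse cubic `f_l = x³ + y³ + z³ + 6l·xyz` with `l ≠ -1/2` has the explicit
rank-4 decomposition of De Paolis, and in particular real rank at most 4. -/
theorem hesse_cubic_rank_le_four (l : ℝ) (hl : l ≠ -(1/2)) :
    (X 0 ^ 3 + X 1 ^ 3 + X 2 ^ 3 + C (6 * l) * (X 0 * X 1 * X 2) : MvPolynomial (Fin 3) ℝ) =
        C (l * (l ^ 2 + l + 1) / (2 * l + 1) ^ 2) * (X 0 + X 1 + X 2) ^ 3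
      + C (1 / (2 * l + 1) ^ 2) * (C (1 + l) * X 0 - C l * X 1 - C l * X 2) ^ 3
      + C (1 / (2 * l + 1) ^ 2) * (- C l * X 0 + C (1 + l) * X 1 - C l * X 2) ^ 3
      + C (1 / (2 * l + 1) ^ 2) * (- C l * X 0 - C l * X 1 + C (1 + l) * X 2) ^ 3 ∧
    realRank 3 3
      (X 0 ^ 3 + X 1 ^ 3 + X 2 ^ 3 + C (6 * l) * (X 0 * X 1 * X 2)) ≤ 4 := by
  have h0 : (2 * l + 1 : ℝ) ≠ 0 := by
    intro h; apply hl; linarith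
  have hd : ((2 * l + 1 : ℝ) ^ 2) ≠ 0 := pow_ne_zero _ h0
  have hC : (C ((2 * l + 1) ^ 2) : MvPolynomial (Fin 3) ℝ) ≠ 0 := by
    simp only [Ne, MvPolynomial.C_eq_zero]; exact hd
  have heq : (X 0 ^ 3 + X 1 ^ 3 + X 2 ^ 3 + C (6 * l) * (X 0 * X 1 * X 2)
        : MvPolynomial (Fin 3) ℝ) =
        C (l * (l ^ 2 + l + 1) / (2 * l + 1) ^ 2) * (X 0 + X 1 + X 2) ^ 3
      + C (1 / (2 * l + 1) ^ 2) * (C (1 + l) * X 0 - C l * X 1 - C l * X 2) ^ 3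
      + C (1 / (2 * l + 1) ^ 2) * (- C l * X 0 + C (1 + l) * X 1 - C l * X 2) ^ 3
      + C (1 / (2 * l + 1) ^ 2) * (- C l * X 0 - C l * X 1 + C (1 + l) * X 2) ^ 3 := by
    apply mul_left_cancel₀ hC
    rw [hesse_key]
    simp only [mul_add, ← mul_assoc, ← C_mul]
    rw [show (2 * l + 1) ^ 2 * ((l * l ^ 2 + l * l + l * 1) / (2 * l + 1) ^ 2) =
          l * l ^ 2 + l * l + l * 1 from mul_div_cancel₀ _ hd,
      show (2 * l + 1) ^ 2 * (1 / (2 * l + 1) ^ 2) = 1 by field_simp]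
    simp
  refine ⟨heq, ?_⟩
  apply Nat.sInf_le
  refine ⟨![l * (l ^ 2 + l + 1) / (2 * l + 1) ^ 2, 1 / (2 * l + 1) ^ 2,
      1 / (2 * l + 1) ^ 2, 1 / (2 * l + 1) ^ 2],
    ![![1, 1, 1], ![1 + l, -l, -l], ![-l, 1 + l, -l], ![-l, -l, 1 + l]], ?_⟩
  rw [heq]
  simp [Fin.sum_univ_succ, map_neg]
  ring
end

section
/- Let f be a real ternary quartic (homogeneous of degree 4 in 3 variables) and suppose there exist linearly independent vectors u, v ∈ ℝ³ such that the binary quartic g(s,t) = f(s·u + t·v) factors over ℝ as a product of four real linear forms in s,t, and g is not a real scalar multiple of the 4th power of a linear form in s,t. Then in every decomposition f = λ₁·l₁⁴ + … + λ_k·l_k⁴ with nonzero real numbers λᵢ and nonzero real linear forms lᵢ, at least two of the λᵢ are positive and at least two of the λᵢ are negative. -/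
open MvPolynomial

/-!
Restricting `f` to the plane spanned by `u` and `v` turns a decomposition of `f` into one of the
binary quartic `g`, so it suffices to show that a binary form `P` which splits over `ℝ` but is not a
multiple of a fourth power needs two negative coefficients in every decomposition
`P = ∑ λⱼ Lⱼ ^ 4`; applied to `-P` this also gives two positive ones. With at most one negative
coefficient, `P + μ M ^ 4 = ∑ λⱼ Lⱼ ^ 4` with `μ` real and all remaining `λⱼ ≥ 0`. If `P` vanishes
where `M` does, so does the right-hand side, which forces every `Lⱼ` with `λⱼ ≠ 0` to be a multiple
of `M` and `P` to be a multiple of `M ^ 4`. Otherwise, on an affine line on which `M` is constant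
the right-hand side is convex, while `P` is a polynomial with four real roots, not all equal. A
convex function cannot be that: three distinct zeros, or a double zero (a critical point, hence a
minimum) beside another zero, force it to vanish on a whole interval.
-/

section Convexity

open Finset

theorem convexOn_finset_sum {ι E : Type*} [AddCommGroup E] [Module ℝ E] {s : Set E}
    (hs : Convex ℝ s) (t : Finset ι) {f : ι → E → ℝ} (hf : ∀ i ∈ t, ConvexOn ℝ s (f i)) :
    ConvexOn ℝ s fun x => ∑ i ∈ t, f i x := by
  classical
  induction t using Finset.induction_on with
  | empty => simpa using convexOn_const (0 : ℝ) hs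
  | insert i t hi ih =>
    simp only [Finset.sum_insert hi]
    exact (hf i (mem_insert_self i t)).add (ih fun j hj => hf j (mem_insert_of_mem hj))

theorem convexOn_const_add_sum_mul_pow {ι : Type*} {d : ℕ} (hd : Even d) (κ : ℝ) (t : Finset ι)
    {lam p q : ι → ℝ} (hlam : ∀ j ∈ t, 0 ≤ lam j) :
    ConvexOn ℝ Set.univ fun τ => κ + ∑ j ∈ t, lam j * (p j + q j * τ) ^ d := by
  refine (convexOn_const κ convex_univ).add (convexOn_finset_sum convex_univ t fun j hj => ?_)
  have hpow := hd.convexOn_pow.comp_affineMap (AffineMap.lineMap (p j) (p j + q j))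
  refine (hpow.smul (hlam j hj)).congr fun τ _ => ?_
  simp only [AffineMap.lineMap_apply_ring', Function.comp_apply, smul_eq_mul]
  ring_nf

variable {G : ℝ → ℝ}

theorem ConvexOn.eq_zero_of_three_zeros (hG : ConvexOn ℝ Set.univ G) {x y z w : ℝ} (hxy : x < y)
    (hw : w ∈ Set.Icc y z) (hx : G x = 0) (hy : G y = 0) (hz : G z = 0) : G w = 0 := by
  refine le_antisymm ?_
    (hy ▸ hG.le_right_of_left_le'' (Set.mem_univ x) (Set.mem_univ w) hxy hw.1 ?_)
  · have hmem : w ∈ segment ℝ x z := by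
      rw [segment_eq_Icc (by linarith [hw.1, hw.2])]
      exact ⟨by linarith [hw.1], hw.2⟩
    simpa [hx, hz] using hG.le_on_segment (Set.mem_univ x) (Set.mem_univ z) hmem
  · rw [hx, hy]

theorem ConvexOn.eq_zero_of_isMinOn (hG : ConvexOn ℝ Set.univ G) {x y w : ℝ}
    (hmin : IsMinOn G Set.univ x) (hw : w ∈ Set.uIcc x y) (hx : G x = 0) (hy : G y = 0) :
    G w = 0 := by
  refine le_antisymm ?_ (hx ▸ hmin (Set.mem_univ w))
  simpa [hx, hy] using hG.le_on_segment (Set.mem_univ x) (Set.mem_univ y) (segment_eq_uIcc x y ▸ hw)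

end Convexity

section RealRootedProducts

open Finset Function

variable {ι : Type*} [Fintype ι]

theorem hasDerivAt_mul_prod_sub_of_eq [DecidableEq ι] (c : ℝ) {ρ : ι → ℝ} {i j : ι}
    (hij : i ≠ j) (hρ : ρ i = ρ j) : HasDerivAt (fun τ => c * ∏ k, (τ - ρ k)) 0 (ρ i) := by
  have hprod := HasDerivAt.finsetProd (u := univ) (x := ρ i)
    fun k _ => (hasDerivAt_id' (ρ i)).sub_const (ρ k)
  have hterm : ∀ k ∈ univ, (∏ l ∈ univ.erase k, (ρ i - ρ l)) • (1 : ℝ) = 0 := by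
    intro k _
    rw [smul_eq_mul, mul_one]
    by_cases hk : k = i
    · subst hk
      exact prod_eq_zero (mem_erase.2 ⟨hij.symm, mem_univ j⟩) (sub_eq_zero.2 hρ)
    · exact prod_eq_zero (mem_erase.2 ⟨Ne.symm hk, mem_univ i⟩) (sub_self _)
  have h := hprod.const_mul c
  rw [sum_eq_zero hterm, mul_zero] at h
  simpa only [Finset.prod_apply] using h

theorem not_convexOn_mul_prod_sub (hι : 2 < Fintype.card ι) {c : ℝ} (hc : c ≠ 0) {ρ : ι → ℝ}
    (hρ : ∃ i j, ρ i ≠ ρ j) : ¬ ConvexOn ℝ Set.univ fun τ => c * ∏ k, (τ - ρ k) := by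
  classical
  intro hG
  have hroot : ∀ i, c * ∏ k, (ρ i - ρ k) = 0 := fun i => by
    rw [prod_eq_zero (mem_univ i) (sub_self _), mul_zero]
  have : Nonempty ι := Fintype.card_pos_iff.1 (by omega)
  obtain ⟨x, y, hxy, hzero⟩ : ∃ x y, x < y ∧ ∀ w ∈ Set.Ioo x y, c * ∏ k, (w - ρ k) = 0 := by
    by_cases hinj : Injective ρ
    · obtain ⟨i, -, hi⟩ := exists_min_image univ ρ univ_nonempty
      obtain ⟨j, -, hj⟩ := exists_max_image univ ρ univ_nonempty
      obtain ⟨k, -, hk⟩ := exists_mem_notMem_of_card_lt_card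
        ((card_le_two (a := i) (b := j)).trans_lt hι)
      simp only [mem_insert, mem_singleton, not_or] at hk
      have hik : ρ i < ρ k := (hi k (mem_univ k)).lt_of_ne (hinj.ne (Ne.symm hk.1))
      refine ⟨ρ k, ρ j, (hj k (mem_univ k)).lt_of_ne (hinj.ne hk.2), fun w hw => ?_⟩
      exact hG.eq_zero_of_three_zeros hik (Set.Ioo_subset_Icc_self hw) (hroot i) (hroot k) (hroot j)
    · obtain ⟨i, j, hρij, hij⟩ := not_injective_iff.1 hinj
      obtain ⟨k, hk⟩ : ∃ k, ρ k ≠ ρ i := by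
        obtain ⟨a, b, hab⟩ := hρ
        by_cases ha : ρ a = ρ i
        · exact ⟨b, ha ▸ hab.symm⟩
        · exact ⟨a, ha⟩
      have hmin : IsMinOn (fun τ => c * ∏ k, (τ - ρ k)) Set.univ (ρ i) :=
        hG.isMinOn_of_rightDeriv_eq_zero (by simp)
          ((hasDerivAt_mul_prod_sub_of_eq c hij hρij).hasDerivWithinAt.derivWithin
            (uniqueDiffWithinAt_Ioi _))
      refine ⟨min (ρ i) (ρ k), max (ρ i) (ρ k), min_lt_max.2 hk.symm, fun w hw => ?_⟩
      exact hG.eq_zero_of_isMinOn hmin (Set.Ioo_subset_Icc_self hw) (hroot i) (hroot k)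
  obtain ⟨w, hw, hwρ⟩ := (Set.Ioo_infinite hxy).exists_notMem_finset (univ.image ρ)
  refine mul_ne_zero hc (prod_ne_zero_iff.2 fun k _ => sub_ne_zero.2 ?_) (hzero w hw)
  exact fun h => hwρ (mem_image.2 ⟨k, mem_univ k, h.symm⟩)

end RealRootedProducts

section BinaryForms

open Finset

def IsSplitBinaryForm (d : ℕ) (P : ℝ → ℝ → ℝ) : Prop :=
  ∃ (c : ℝ) (a b : Fin d → ℝ), P = fun s t => c * ∏ j, (a j * s + b j * t)

def IsPowBinaryForm (d : ℕ) (P : ℝ → ℝ → ℝ) : Prop :=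
  ∃ c p q : ℝ, P = fun s t => c * (p * s + q * t) ^ d

variable {d : ℕ} {P : ℝ → ℝ → ℝ}

theorem IsSplitBinaryForm.neg (hP : IsSplitBinaryForm d P) : IsSplitBinaryForm d (-P) := by
  obtain ⟨c, a, b, rfl⟩ := hP
  exact ⟨-c, a, b, funext₂ fun s t => by simp⟩

theorem IsPowBinaryForm.neg (hP : IsPowBinaryForm d P) : IsPowBinaryForm d (-P) := by
  obtain ⟨c, p, q, rfl⟩ := hP
  exact ⟨-c, p, q, funext₂ fun s t => by simp⟩

theorem exists_eq_mul_of_mul_eq_mul {A B α β : ℝ} (hM : (α, β) ≠ 0) (h : A * β = B * α) :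
    ∃ κ, A = κ * α ∧ B = κ * β := by
  by_cases hα : α = 0
  · have hβ : β ≠ 0 := fun hβ => hM (by simp [hα, hβ])
    refine ⟨B / β, ?_, by field_simp⟩
    simpa [hα, hβ] using h
  · exact ⟨A / α, by field_simp, by field_simp; linarith⟩

theorem isPowBinaryForm_of_forall_mul_eq_mul (c : ℝ) {a b : Fin d → ℝ}
    (h : ∀ i j, a i * b j = a j * b i) :
    IsPowBinaryForm d fun s t => c * ∏ j, (a j * s + b j * t) := by
  obtain ⟨p, q, hpq⟩ : ∃ p q : ℝ, ∀ j, ∃ κ, a j = κ * p ∧ b j = κ * q := by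
    by_cases hz : ∃ i, (a i, b i) ≠ 0
    · obtain ⟨i, hi⟩ := hz
      exact ⟨a i, b i, fun j => exists_eq_mul_of_mul_eq_mul hi ((h j i).trans (mul_comm _ _))⟩
    · push Not at hz
      exact ⟨0, 0, fun j => ⟨0, by simpa using hz j⟩⟩
  choose κ hκ using hpq
  refine ⟨c * ∏ j, κ j, p, q, funext₂ fun s t => ?_⟩
  have hfactor : ∀ j, a j * s + b j * t = κ j * (p * s + q * t) := fun j => by
    rw [(hκ j).1, (hκ j).2]; ring
  simp only [hfactor, prod_mul_distrib, prod_const, card_univ, Fintype.card_fin]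
  ring

theorem exists_sum_mul_pow_eq_mul_pow_of_eq_zero {ι : Type*} (hd : Even d) (hd0 : d ≠ 0)
    {T : Finset ι} {lam A B : ι → ℝ} (hlam : ∀ j ∈ T, 0 ≤ lam j) {α β : ℝ} (hM : (α, β) ≠ 0)
    (h0 : ∑ j ∈ T, lam j * (A j * β + B j * -α) ^ d = 0) :
    ∃ C, ∀ s t, ∑ j ∈ T, lam j * (A j * s + B j * t) ^ d = C * (α * s + β * t) ^ d := by
  have hterm := (sum_eq_zero_iff_of_nonneg fun j hj =>
    mul_nonneg (hlam j hj) (hd.pow_nonneg _)).1 h0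
  have hC : ∀ j ∈ T, ∃ C, ∀ s t, lam j * (A j * s + B j * t) ^ d = C * (α * s + β * t) ^ d := by
    intro j hj
    rcases mul_eq_zero.1 (hterm j hj) with hl | hw
    · exact ⟨0, fun s t => by simp [hl]⟩
    · obtain ⟨κ, hA, hB⟩ := exists_eq_mul_of_mul_eq_mul (A := A j) (B := B j) hM
        (by linear_combination (pow_eq_zero_iff hd0).1 hw)
      exact ⟨lam j * κ ^ d, fun s t => by
        rw [hA, hB, show κ * α * s + κ * β * t = κ * (α * s + β * t) by ring, mul_pow]; ring⟩
  choose! C hC using hC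
  exact ⟨∑ j ∈ T, C j, fun s t => by rw [sum_mul]; exact sum_congr rfl fun j hj => hC j hj s t⟩

theorem exists_sum_mul_pow_eq_mul_pow_of_subsingleton {ι : Type*} (hd0 : d ≠ 0) {N : Finset ι}
    (hN : (N : Set ι).Subsingleton) (lam A B : ι → ℝ) :
    ∃ μ α β : ℝ, (α, β) ≠ 0 ∧
      ∀ s t, ∑ j ∈ N, lam j * (A j * s + B j * t) ^ d = μ * (α * s + β * t) ^ d := by
  rcases hN.eq_empty_or_singleton with hN | ⟨j, hN⟩
  · exact ⟨0, 1, 0, by simp, fun s t => by simp [coe_eq_empty.1 hN]⟩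
  · rw [coe_eq_singleton] at hN
    subst hN
    by_cases hj : (A j, B j) = 0
    · exact ⟨0, 1, 0, by simp, fun s t => by simp [Prod.mk_eq_zero.1 hj, hd0]⟩
    · exact ⟨lam j, A j, B j, hj, fun s t => by simp⟩

theorem not_convexOn_mul_prod_line {a b : Fin d → ℝ} (hd : 3 ≤ d) (c : ℝ) {i j : Fin d}
    (hij : a i * b j ≠ a j * b i) {α β : ℝ} (hM : (α, β) ≠ 0)
    (hroot : c * ∏ k, (a k * β + b k * -α) ≠ 0) :
    ¬ ConvexOn ℝ Set.univ fun τ => c * ∏ k, (a k * (α + τ * β) + b k * (β + τ * -α)) := by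
  set p : Fin d → ℝ := fun k => a k * α + b k * β
  set q : Fin d → ℝ := fun k => a k * β + b k * -α
  have hq : ∀ k, q k ≠ 0 := fun k hk => hroot (by rw [prod_eq_zero (mem_univ k) hk, mul_zero])
  have hr : α ^ 2 + β ^ 2 ≠ 0 := fun hr =>
    hM (Prod.mk_eq_zero.2 ⟨by nlinarith [sq_nonneg β], by nlinarith [sq_nonneg α]⟩)
  have hfun : (fun τ => c * ∏ k, (a k * (α + τ * β) + b k * (β + τ * -α)))
      = fun τ => (c * ∏ k, q k) * ∏ k, (τ - -p k / q k) := by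
    funext τ
    rw [mul_assoc, ← prod_mul_distrib]
    refine congrArg (c * ·) (prod_congr rfl fun k _ => ?_)
    field_simp [hq k]
    ring
  rw [hfun]
  refine not_convexOn_mul_prod_sub (by rw [Fintype.card_fin]; omega) hroot ⟨i, j, fun h => hij ?_⟩
  rw [div_eq_div_iff (hq i) (hq j)] at h
  -- `p i * q j - p j * q i = (a j * b i - a i * b j) * (α ^ 2 + β ^ 2)`
  refine mul_right_cancel₀ hr ?_
  linear_combination h

theorem IsSplitBinaryForm.not_forall_eq_mul_pow_add_sum {ι : Type*} (hP : IsSplitBinaryForm d P)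
    (hnot : ¬ IsPowBinaryForm d P) (hd : Even d) (hd3 : 3 ≤ d) {T : Finset ι}
    {lam A B : ι → ℝ} (hlam : ∀ j ∈ T, 0 ≤ lam j) {μ α β : ℝ} (hM : (α, β) ≠ 0) :
    ¬ ∀ s t, P s t = μ * (α * s + β * t) ^ d + ∑ j ∈ T, lam j * (A j * s + B j * t) ^ d := by
  intro h
  by_cases hroot : P β (-α) = 0
  · have h0 := h β (-α)
    rw [hroot, show α * β + β * -α = 0 by ring, zero_pow (by omega), mul_zero, zero_add] at h0
    obtain ⟨C, hC⟩ := exists_sum_mul_pow_eq_mul_pow_of_eq_zero hd (by omega) hlam hM h0.symm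
    exact hnot ⟨μ + C, α, β, funext₂ fun s t => by rw [h, hC]; ring⟩
  obtain ⟨c, a, b, rfl⟩ := hP
  simp only at h hroot
  obtain ⟨i, j, hij⟩ : ∃ i j, a i * b j ≠ a j * b i := by
    by_contra! hall
    exact hnot (isPowBinaryForm_of_forall_mul_eq_mul c hall)
  refine not_convexOn_mul_prod_line hd3 c hij hM hroot ?_
  refine (convexOn_const_add_sum_mul_pow hd (μ * (α ^ 2 + β ^ 2) ^ d) T
    (p := fun j => A j * α + B j * β) (q := fun j => A j * β - B j * α) hlam).congr
    fun τ _ => ?_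
  rw [h]
  dsimp only
  congr 1
  · ring_nf
  · exact sum_congr rfl fun j _ => by ring_nf

theorem IsSplitBinaryForm.two_le_ncard_neg {ι : Type*} [Fintype ι] (hP : IsSplitBinaryForm d P)
    (hnot : ¬ IsPowBinaryForm d P) (hd : Even d) (hd3 : 3 ≤ d) {lam A B : ι → ℝ}
    (h : ∀ s t, P s t = ∑ j, lam j * (A j * s + B j * t) ^ d) :
    2 ≤ {j | lam j < 0}.ncard := by
  classical
  by_contra! hlt
  have hN : ((univ.filter (lam · < 0) : Finset ι) : Set ι).Subsingleton := by
    rw [coe_filter_univ]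
    exact Set.ncard_le_one_iff_subsingleton.1 (by omega)
  obtain ⟨μ, α, β, hM, hμ⟩ :=
    exists_sum_mul_pow_eq_mul_pow_of_subsingleton (d := d) (by omega) hN lam A B
  refine hP.not_forall_eq_mul_pow_add_sum (μ := μ) (A := A) (B := B) hnot hd hd3
    (T := univ.filter (¬ lam · < 0))
    (fun j hj => not_lt.1 (mem_filter.1 hj).2) hM fun s t => ?_
  rw [h, ← sum_filter_add_sum_filter_not univ (lam · < 0), hμ]

end BinaryForms

theorem quartic_line_two_pos_two_neg_general
    (f : MvPolynomial (Fin 3) ℝ)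
    (u v : Fin 3 → ℝ)
    (g : MvPolynomial (Fin 2) ℝ)
    (hg : g = MvPolynomial.aeval
      (fun i : Fin 3 => C (u i) * X 0 + C (v i) * X 1) f)
    (hsplit : ∃ a b : Fin 4 → ℝ,
      g = ∏ j : Fin 4, (C (a j) * X 0 + C (b j) * X 1))
    (hnotpow : ¬ ∃ c a b : ℝ, g = C c * (C a * X 0 + C b * X 1) ^ 4)
    (k : ℕ) (lam : Fin k → ℝ) (l : Fin k → Fin 3 → ℝ)
    (hdec : f = ∑ j : Fin k, C (lam j) * (∑ i : Fin 3, C (l j i) * X i) ^ 4) :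
    2 ≤ {j : Fin k | 0 < lam j}.ncard ∧ 2 ≤ {j : Fin k | lam j < 0}.ncard := by
  obtain ⟨a, b, hab⟩ := hsplit
  set P : ℝ → ℝ → ℝ := fun s t => eval ![s, t] g
  have hP : IsSplitBinaryForm 4 P := ⟨1, a, b, funext₂ fun s t => by simp [P, hab]⟩
  have hnot : ¬ IsPowBinaryForm 4 P := by
    rintro ⟨c, p, q, hcpq⟩
    refine hnotpow ⟨c, p, q, MvPolynomial.funext fun x => ?_⟩
    have hx : ![x 0, x 1] = x := by ext i; fin_cases i <;> rfl
    have hcpq' : eval ![x 0, x 1] g = _ := congrFun₂ hcpq (x 0) (x 1)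
    rw [hx] at hcpq'
    simpa using hcpq'
  have hPdec : ∀ s t, P s t =
      ∑ j, lam j * ((∑ i, l j i * u i) * s + (∑ i, l j i * v i) * t) ^ 4 := by
    intro s t
    simp [P, hg, hdec, mul_add, Finset.sum_add_distrib, Finset.sum_mul, mul_assoc]
  have hnot' : ¬ IsPowBinaryForm 4 (-P) := fun h => hnot (by simpa using h.neg)
  have hPdec' : ∀ s t, (-P) s t =
      ∑ j, (-lam) j * ((∑ i, l j i * u i) * s + (∑ i, l j i * v i) * t) ^ 4 := fun s t => by
    simp [hPdec s t]
  exact ⟨by simpa using hP.neg.two_le_ncard_neg hnot' ⟨2, rfl⟩ (by norm_num) hPdec',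
    hP.two_le_ncard_neg hnot ⟨2, rfl⟩ (by norm_num) hPdec⟩

/-- If a ternary quartic `f` restricts, along a real line spanned by linearly independent
`u, v`, to a binary quartic that splits into four real linear factors but is not a scalar
multiple of a fourth power, then every decomposition of `f` as a linear combination of fourth
powers of nonzero real linear forms with nonzero coefficients has at least two positive and at
least two negative coefficients. -/
theorem quartic_line_two_pos_two_neg
    (f : MvPolynomial (Fin 3) ℝ) (hf : f.IsHomogeneous 4)
    (u v : Fin 3 → ℝ) (huv : LinearIndependent ℝ ![u, v])
    (g : MvPolynomial (Fin 2) ℝ)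
    (hg : g = MvPolynomial.aeval
      (fun i : Fin 3 => C (u i) * X 0 + C (v i) * X 1) f)
    (hsplit : ∃ a b : Fin 4 → ℝ,
      g = ∏ j : Fin 4, (C (a j) * X 0 + C (b j) * X 1))
    (hnotpow : ¬ ∃ c a b : ℝ, g = C c * (C a * X 0 + C b * X 1) ^ 4)
    (k : ℕ) (lam : Fin k → ℝ) (l : Fin k → Fin 3 → ℝ)
    (hlam : ∀ j, lam j ≠ 0) (hl : ∀ j, l j ≠ 0)
    (hdec : f = ∑ j : Fin k, C (lam j) * (∑ i : Fin 3, C (l j i) * X i) ^ 4) :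
    2 ≤ {j : Fin k | 0 < lam j}.ncard ∧ 2 ≤ {j : Fin k | lam j < 0}.ncard :=
  quartic_line_two_pos_two_neg_general f u v g hg hsplit hnotpow k lam l hdec
end

section
/- The real ternary quartic f = x⁴ + y⁴ + z⁴ − 3x²y² − 3x²z² + y²z² has real rank at least 7: rk(f) ≥ 7. -/
open MvPolynomial

lemma negdir (w1 w2 w3 : ℝ) (hw : 0 < w1^2 + w2^2 + w3^2) :
    ∃ m1 m2 m3 : ℝ,
      (m1*w1)^2+(m2*w2)^2+(m3*w3)^2 - (m1*w1)*(m2*w2) - (m1*w1)*(m3*w3) + (m2*w2)*(m3*w3)/3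
        - (m1*w2+m2*w1)^2/2 - (m1*w3+m3*w1)^2/2 + (m2*w3+m3*w2)^2/6 < 0 := by
  by_contra hcon
  push_neg at hcon
  have hal : (0:ℝ) ≤ w1^2 - w2^2/2 - w3^2/2 := by linarith [hcon 1 0 0]
  have hbe : (0:ℝ) ≤ w2^2 - w1^2/2 + w3^2/6 := by linarith [hcon 0 1 0]
  have hga : (0:ℝ) ≤ w3^2 - w1^2/2 + w2^2/6 := by linarith [hcon 0 0 1]
  set al := w1^2 - w2^2/2 - w3^2/2 with hal_def
  set be := w2^2 - w1^2/2 + w3^2/6 with hbe_def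
  set ga := w3^2 - w1^2/2 + w2^2/6 with hga_def
  have hR1 : (0:ℝ) ≤ al * (al*be - w1^2*w2^2) := by
    have h := hcon (w1*w2) al 0; rw [hal_def, hbe_def] at *; linarith [h]
  have hR2 : (0:ℝ) ≤ be * (al*be - w1^2*w2^2) := by
    have h := hcon be (w1*w2) 0; rw [hal_def, hbe_def] at *; linarith [h]
  have hR4 : (0:ℝ) ≤ ga * (al*ga - w1^2*w3^2) := by
    have h := hcon ga 0 (w1*w3); rw [hal_def, hga_def] at *; linarith [h]
  have p1 : (0:ℝ) ≤ al*al*al := by positivity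
  have p2 : (0:ℝ) ≤ al*al*be := by positivity
  have p3 : (0:ℝ) ≤ al*al*ga := by positivity
  have p4 : (0:ℝ) ≤ al*be*be := by positivity
  have p5 : (0:ℝ) ≤ al*be*ga := by positivity
  have p6 : (0:ℝ) ≤ be*be*be := by positivity
  have p7 : (0:ℝ) ≤ be*be*ga := by positivity
  have hcube : (0:ℝ) < (w1^2+w2^2+w3^2)^3 := pow_pos hw 3
  rw [hal_def, hbe_def, hga_def] at *
  linarith [p1,p2,p3,p4,p5,p6,p7,hR1,hR2,hR4,hcube]

set_option maxHeartbeats 2000000 in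
lemma keyReal (lam x y z : Fin 6 → ℝ)
    (M1 : ∑ j, lam j * (x j)^4 = 1) (M2 : ∑ j, lam j * (y j)^4 = 1)
    (M3 : ∑ j, lam j * (z j)^4 = 1)
    (M4 : ∑ j, lam j * ((x j)^2 * (y j)^2) = -(1/2))
    (M5 : ∑ j, lam j * ((x j)^2 * (z j)^2) = -(1/2))
    (M6 : ∑ j, lam j * ((y j)^2 * (z j)^2) = 1/6)
    (M7 : ∑ j, lam j * ((x j)^3 * y j) = 0)
    (M8 : ∑ j, lam j * ((x j)^3 * z j) = 0)
    (M9 : ∑ j, lam j * (x j * (y j)^3) = 0)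
    (M10 : ∑ j, lam j * ((y j)^3 * z j) = 0)
    (M11 : ∑ j, lam j * (x j * (z j)^3) = 0)
    (M12 : ∑ j, lam j * (y j * (z j)^3) = 0)
    (M13 : ∑ j, lam j * ((x j)^2 * (y j * z j)) = 0)
    (M14 : ∑ j, lam j * ((y j)^2 * (x j * z j)) = 0)
    (M15 : ∑ j, lam j * ((z j)^2 * (x j * y j)) = 0) : False := by
  classical
  have hQ : ∀ a b c d e f : ℝ,
      ∑ j, lam j * (a*(x j)^2 + b*(y j)^2 + c*(z j)^2 + d*(x j*y j) + e*(x j*z j) + f*(y j*z j))^2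
        = a^2+b^2+c^2 - a*b - a*c + b*c/3 - d^2/2 - e^2/2 + f^2/6 := by
    intro a b c d e f
    have expand : ∀ j : Fin 6,
        lam j * (a*(x j)^2 + b*(y j)^2 + c*(z j)^2 + d*(x j*y j) + e*(x j*z j) + f*(y j*z j))^2
        = a^2*(lam j * (x j)^4) + b^2*(lam j * (y j)^4) + c^2*(lam j * (z j)^4)
          + (2*a*b+d^2)*(lam j * ((x j)^2*(y j)^2)) + (2*a*c+e^2)*(lam j * ((x j)^2*(z j)^2))
          + (2*b*c+f^2)*(lam j * ((y j)^2*(z j)^2))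
          + (2*a*d)*(lam j * ((x j)^3*y j)) + (2*a*e)*(lam j * ((x j)^3*z j))
          + (2*b*d)*(lam j * (x j*(y j)^3)) + (2*b*f)*(lam j * ((y j)^3*z j))
          + (2*c*e)*(lam j * (x j*(z j)^3)) + (2*c*f)*(lam j * (y j*(z j)^3))
          + (2*a*f+2*d*e)*(lam j * ((x j)^2*(y j*z j)))
          + (2*b*e+2*d*f)*(lam j * ((y j)^2*(x j*z j)))
          + (2*c*d+2*e*f)*(lam j * ((z j)^2*(x j*y j))) := fun j => by ring
    calc ∑ j, lam j * (a*(x j)^2 + b*(y j)^2 + c*(z j)^2 + d*(x j*y j) + e*(x j*z j) + f*(y j*z j))^2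
        = ∑ j, (a^2*(lam j * (x j)^4) + b^2*(lam j * (y j)^4) + c^2*(lam j * (z j)^4)
          + (2*a*b+d^2)*(lam j * ((x j)^2*(y j)^2)) + (2*a*c+e^2)*(lam j * ((x j)^2*(z j)^2))
          + (2*b*c+f^2)*(lam j * ((y j)^2*(z j)^2))
          + (2*a*d)*(lam j * ((x j)^3*y j)) + (2*a*e)*(lam j * ((x j)^3*z j))
          + (2*b*d)*(lam j * (x j*(y j)^3)) + (2*b*f)*(lam j * ((y j)^3*z j))
          + (2*c*e)*(lam j * (x j*(z j)^3)) + (2*c*f)*(lam j * (y j*(z j)^3))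
          + (2*a*f+2*d*e)*(lam j * ((x j)^2*(y j*z j)))
          + (2*b*e+2*d*f)*(lam j * ((y j)^2*(x j*z j)))
          + (2*c*d+2*e*f)*(lam j * ((z j)^2*(x j*y j)))) :=
          Finset.sum_congr rfl fun j _ => expand j
      _ = a^2+b^2+c^2 - a*b - a*c + b*c/3 - d^2/2 - e^2/2 + f^2/6 := by
          simp only [Finset.sum_add_distrib, ← Finset.mul_sum]
          rw [M1,M2,M3,M4,M5,M6,M7,M8,M9,M10,M11,M12,M13,M14,M15]; ring
  set T : Finset (Fin 6) := Finset.univ.filter (fun j => lam j < 0) with hT_def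
  rcases le_or_gt T.card 2 with hT | hT
  · -- at most two negative coefficients
    have hnotli : ¬ LinearIndependent ℝ
        (![fun j : T => x j.1, fun j : T => y j.1, fun j : T => z j.1]) := by
      intro hli
      have h1 := hli.fintype_card_le_finrank
      rw [Module.finrank_fintype_fun_eq_card, Fintype.card_coe] at h1
      simp [Fintype.card_fin] at h1
      omega
    rw [Fintype.not_linearIndependent_iff] at hnotli
    obtain ⟨g, hg0, i0, hgi⟩ := hnotli
    have hvan : ∀ j : Fin 6, lam j < 0 → g 0 * x j + g 1 * y j + g 2 * z j = 0 := by
      intro j hj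
      have hmem : j ∈ T := by simp [hT_def, hj]
      have := congrFun hg0 ⟨j, hmem⟩
      simpa [Fin.sum_univ_three, Matrix.cons_val_zero, Matrix.cons_val_one] using this
    have hwpos : 0 < (g 0)^2 + (g 1)^2 + (g 2)^2 := by
      have h2 : 0 < g i0 ^ 2 := lt_of_le_of_ne (sq_nonneg _) (Ne.symm (pow_ne_zero 2 hgi))
      have h3 : g i0 ^ 2 ≤ ∑ i, g i ^ 2 :=
        Finset.single_le_sum (fun i _ => sq_nonneg (g i)) (Finset.mem_univ i0)
      rw [Fin.sum_univ_three] at h3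
      linarith
    obtain ⟨m1, m2, m3, hneg⟩ := negdir (g 0) (g 1) (g 2) hwpos
    have hQ' := hQ (m1*g 0) (m2*g 1) (m3*g 2) (m1*g 1+m2*g 0) (m1*g 2+m3*g 0) (m2*g 2+m3*g 1)
    have hge : 0 ≤ ∑ j, lam j * ((m1*g 0)*(x j)^2 + (m2*g 1)*(y j)^2 + (m3*g 2)*(z j)^2
        + (m1*g 1+m2*g 0)*(x j*y j) + (m1*g 2+m3*g 0)*(x j*z j) + (m2*g 2+m3*g 1)*(y j*z j))^2 := by
      apply Finset.sum_nonneg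
      intro j _
      rcases lt_or_ge (lam j) 0 with hl | hl
      · have h0 := hvan j hl
        have hfac : (m1*g 0)*(x j)^2 + (m2*g 1)*(y j)^2 + (m3*g 2)*(z j)^2
            + (m1*g 1+m2*g 0)*(x j*y j) + (m1*g 2+m3*g 0)*(x j*z j) + (m2*g 2+m3*g 1)*(y j*z j)
            = (m1*x j + m2*y j + m3*z j) * (g 0*x j + g 1*y j + g 2*z j) := by ring
        rw [hfac, h0, mul_zero]
        simp
      · exact mul_nonneg hl (sq_nonneg _)
    rw [hQ'] at hge
    nlinarith [hneg, hge]
  · -- at least three negative coefficients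
    have hcard : (Finset.univ.filter (fun j => ¬ lam j < 0)).card ≤ 3 := by
      have := Finset.card_filter_add_card_filter_not (s := (Finset.univ : Finset (Fin 6)))
        (p := fun j => lam j < 0)
      simp only [Finset.card_univ, Fintype.card_fin] at this
      rw [← hT_def] at this
      omega
    set S : Finset (Fin 6) := Finset.univ.filter (fun j => ¬ lam j < 0) with hS_def
    have hnotli : ¬ LinearIndependent ℝ
        (![fun j : S => (x j.1)^2, fun j : S => (y j.1)^2, fun j : S => (z j.1)^2,
           fun j : S => y j.1 * z j.1]) := by
      intro hli
      have h1 := hli.fintype_card_le_finrank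
      rw [Module.finrank_fintype_fun_eq_card, Fintype.card_coe] at h1
      simp [Fintype.card_fin] at h1
      omega
    rw [Fintype.not_linearIndependent_iff] at hnotli
    obtain ⟨g, hg0, i0, hgi⟩ := hnotli
    have hvan : ∀ j : Fin 6, ¬ lam j < 0 →
        g 0 * (x j)^2 + g 1 * (y j)^2 + g 2 * (z j)^2 + g 3 * (y j * z j) = 0 := by
      intro j hj
      have hmem : j ∈ S := by simp [hS_def]; exact le_of_not_gt hj
      have := congrFun hg0 ⟨j, hmem⟩
      simpa [Fin.sum_univ_four, Matrix.cons_val_zero, Matrix.cons_val_one, Matrix.head_cons,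
        Matrix.cons_val_two, Matrix.cons_val_three, Matrix.tail_cons] using this
    have hQ' := hQ (g 0) (g 1) (g 2) 0 0 (g 3)
    have hle : ∑ j, lam j * ((g 0)*(x j)^2 + (g 1)*(y j)^2 + (g 2)*(z j)^2
        + 0*(x j*y j) + 0*(x j*z j) + (g 3)*(y j*z j))^2 ≤ 0 := by
      apply Finset.sum_nonpos
      intro j _
      rcases lt_or_ge (lam j) 0 with hl | hl
      · exact mul_nonpos_of_nonpos_of_nonneg (le_of_lt hl) (sq_nonneg _)
      · have h0 := hvan j (not_lt.mpr hl)
        have hfac : (g 0)*(x j)^2 + (g 1)*(y j)^2 + (g 2)*(z j)^2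
            + 0*(x j*y j) + 0*(x j*z j) + (g 3)*(y j*z j)
            = g 0 * (x j)^2 + g 1 * (y j)^2 + g 2 * (z j)^2 + g 3 * (y j * z j) := by ring
        rw [hfac, h0]
        simp
    rw [hQ'] at hle
    have hpos : 0 < (g 0)^2+(g 1)^2+(g 2)^2 - (g 0)*(g 1) - (g 0)*(g 2) + (g 1)*(g 2)/3
        - 0^2/2 - 0^2/2 + (g 3)^2/6 := by
      have h2 : 0 < g i0 ^ 2 := lt_of_le_of_ne (sq_nonneg _) (Ne.symm (pow_ne_zero 2 hgi))
      have h3' : g i0 ^ 2 ≤ ∑ i, g i ^ 2 :=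
        Finset.single_le_sum (fun i _ => sq_nonneg (g i)) (Finset.mem_univ i0)
      rw [Fin.sum_univ_four] at h3'
      have h3 : 0 < (g 0)^2 + (g 1)^2 + (g 2)^2 + (g 3)^2 := by linarith
      nlinarith [sq_nonneg (2*g 0 - g 1 - g 2), sq_nonneg (g 1 - g 2), sq_nonneg (g 1 + g 2),
        sq_nonneg (g 0), sq_nonneg (g 1), sq_nonneg (g 2), sq_nonneg (g 3)]
    linarith

lemma padsum (k : ℕ) (hk : k ≤ 6) (F : ℕ → ℝ) (hF : ∀ n, k ≤ n → F n = 0) :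
    ∑ j : Fin 6, F j = ∑ j : Fin k, F j := by
  rw [Fin.sum_univ_eq_sum_range F 6, Fin.sum_univ_eq_sum_range F k]
  exact (Finset.sum_subset (Finset.range_subset_range.mpr hk)
    (fun n _ hn => hF n (by simpa using hn))).symm

set_option maxHeartbeats 2000000 in
lemma no_small_decomp (k : ℕ) (hk6 : k ≤ 6) (lam : Fin k → ℝ) (l : Fin k → Fin 3 → ℝ)
    (hf : (X 0 ^ 4 + X 1 ^ 4 + X 2 ^ 4 - C 3 * X 0 ^ 2 * X 1 ^ 2
        - C 3 * X 0 ^ 2 * X 2 ^ 2 + X 1 ^ 2 * X 2 ^ 2 : MvPolynomial (Fin 3) ℝ)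
      = ∑ j, MvPolynomial.C (lam j) * (∑ i, MvPolynomial.C (l j i) * MvPolynomial.X i) ^ 4) :
    False := by
  classical
  set lamN : ℕ → ℝ := fun n => if h : n < k then lam ⟨n, h⟩ else 0 with hlamN
  set lN : ℕ → Fin 3 → ℝ := fun n => if h : n < k then l ⟨n, h⟩ else 0 with hlN
  have EVk : ∀ v0 v1 v2 : ℝ,
      ∑ j : Fin k, lam j * (l j 0 * v0 + l j 1 * v1 + l j 2 * v2) ^ 4
        = v0^4 + v1^4 + v2^4 - 3*v0^2*v1^2 - 3*v0^2*v2^2 + v1^2*v2^2 := by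
    intro v0 v1 v2
    have h := congrArg (MvPolynomial.eval ![v0, v1, v2]) hf.symm
    simp only [map_sum, map_add, map_sub, map_mul, map_pow, eval_C, eval_X,
      Fin.sum_univ_three, Matrix.cons_val_zero, Matrix.cons_val_one, Matrix.head_cons,
      Matrix.cons_val_two, Matrix.tail_cons] at h
    linear_combination h
  have EV : ∀ v0 v1 v2 : ℝ,
      ∑ j : Fin 6, lamN j * (lN j 0 * v0 + lN j 1 * v1 + lN j 2 * v2) ^ 4
        = v0^4 + v1^4 + v2^4 - 3*v0^2*v1^2 - 3*v0^2*v2^2 + v1^2*v2^2 := by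
    intro v0 v1 v2
    have hpad := padsum k hk6 (fun n => lamN n * (lN n 0 * v0 + lN n 1 * v1 + lN n 2 * v2) ^ 4)
      (fun n hn => by
        have hnk : ¬ n < k := by omega
        simp [hlamN, hnk])
    beta_reduce at hpad
    rw [hpad]
    rw [show ∑ j : Fin k, lamN j * (lN j 0 * v0 + lN j 1 * v1 + lN j 2 * v2) ^ 4
        = ∑ j : Fin k, lam j * (l j 0 * v0 + l j 1 * v1 + l j 2 * v2) ^ 4 from
      Finset.sum_congr rfl fun j _ => by simp [hlamN, hlN, j.isLt]]
    exact EVk v0 v1 v2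
  simp only [Fin.sum_univ_six] at EV
  have M1 : ∑ j : Fin 6, lamN j * (lN j 0)^4 = 1 := by
    rw [Fin.sum_univ_six]
    linear_combination (1 : ℝ) * EV 1 0 0
  have M2 : ∑ j : Fin 6, lamN j * (lN j 1)^4 = 1 := by
    rw [Fin.sum_univ_six]
    linear_combination (1 : ℝ) * EV 0 1 0
  have M3 : ∑ j : Fin 6, lamN j * (lN j 2)^4 = 1 := by
    rw [Fin.sum_univ_six]
    linear_combination (1 : ℝ) * EV 0 0 1
  have M4 : ∑ j : Fin 6, lamN j * ((lN j 0)^2 * (lN j 1)^2) = -(1/2) := by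
    rw [Fin.sum_univ_six]
    linear_combination (-1/6 : ℝ) * EV 1 0 0 + (-1/6 : ℝ) * EV 0 1 0 + (1/12 : ℝ) * EV 1 1 0 + (1/12 : ℝ) * EV 1 (-1) 0
  have M5 : ∑ j : Fin 6, lamN j * ((lN j 0)^2 * (lN j 2)^2) = -(1/2) := by
    rw [Fin.sum_univ_six]
    linear_combination (-1/6 : ℝ) * EV 1 0 0 + (-1/6 : ℝ) * EV 0 0 1 + (1/12 : ℝ) * EV 1 0 1 + (1/12 : ℝ) * EV 1 0 (-1)
  have M6 : ∑ j : Fin 6, lamN j * ((lN j 1)^2 * (lN j 2)^2) = 1/6 := by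
    rw [Fin.sum_univ_six]
    linear_combination (-1/6 : ℝ) * EV 0 1 0 + (-1/6 : ℝ) * EV 0 0 1 + (1/12 : ℝ) * EV 0 1 1 + (1/12 : ℝ) * EV 0 1 (-1)
  have M7 : ∑ j : Fin 6, lamN j * ((lN j 0)^3 * lN j 1) = 0 := by
    rw [Fin.sum_univ_six]
    linear_combination (-1/8 : ℝ) * EV 1 0 0 + (1/2 : ℝ) * EV 0 1 0 + (1/4 : ℝ) * EV 1 1 0 + (-1/12 : ℝ) * EV 1 (-1) 0 + (-1/24 : ℝ) * EV 1 2 0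
  have M8 : ∑ j : Fin 6, lamN j * ((lN j 0)^3 * lN j 2) = 0 := by
    rw [Fin.sum_univ_six]
    linear_combination (-1/8 : ℝ) * EV 1 0 0 + (1/2 : ℝ) * EV 0 0 1 + (1/4 : ℝ) * EV 1 0 1 + (-1/12 : ℝ) * EV 1 0 (-1) + (-1/24 : ℝ) * EV 1 0 2
  have M9 : ∑ j : Fin 6, lamN j * (lN j 0 * (lN j 1)^3) = 0 := by
    rw [Fin.sum_univ_six]
    linear_combination (1/8 : ℝ) * EV 1 0 0 + (-1/2 : ℝ) * EV 0 1 0 + (-1/8 : ℝ) * EV 1 1 0 + (-1/24 : ℝ) * EV 1 (-1) 0 + (1/24 : ℝ) * EV 1 2 0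
  have M10 : ∑ j : Fin 6, lamN j * ((lN j 1)^3 * lN j 2) = 0 := by
    rw [Fin.sum_univ_six]
    linear_combination (-1/8 : ℝ) * EV 0 1 0 + (1/2 : ℝ) * EV 0 0 1 + (1/4 : ℝ) * EV 0 1 1 + (-1/12 : ℝ) * EV 0 1 (-1) + (-1/24 : ℝ) * EV 0 1 2
  have M11 : ∑ j : Fin 6, lamN j * (lN j 0 * (lN j 2)^3) = 0 := by
    rw [Fin.sum_univ_six]
    linear_combination (1/8 : ℝ) * EV 1 0 0 + (-1/2 : ℝ) * EV 0 0 1 + (-1/8 : ℝ) * EV 1 0 1 + (-1/24 : ℝ) * EV 1 0 (-1) + (1/24 : ℝ) * EV 1 0 2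
  have M12 : ∑ j : Fin 6, lamN j * (lN j 1 * (lN j 2)^3) = 0 := by
    rw [Fin.sum_univ_six]
    linear_combination (1/8 : ℝ) * EV 0 1 0 + (-1/2 : ℝ) * EV 0 0 1 + (-1/8 : ℝ) * EV 0 1 1 + (-1/24 : ℝ) * EV 0 1 (-1) + (1/24 : ℝ) * EV 0 1 2
  have M13 : ∑ j : Fin 6, lamN j * ((lN j 0)^2 * (lN j 1 * lN j 2)) = 0 := by
    rw [Fin.sum_univ_six]
    linear_combination (-1/12 : ℝ) * EV 1 0 0 + (-1/12 : ℝ) * EV 0 1 0 + (-1/12 : ℝ) * EV 0 0 1 + (1/24 : ℝ) * EV 1 1 0 + (1/24 : ℝ) * EV 1 (-1) 0 + (1/24 : ℝ) * EV 1 0 1 + (1/24 : ℝ) * EV 1 0 (-1) + (1/12 : ℝ) * EV 0 1 (-1) + (-1/24 : ℝ) * EV 1 (-1) 1 + (-1/24 : ℝ) * EV 1 1 (-1)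
  have M14 : ∑ j : Fin 6, lamN j * ((lN j 1)^2 * (lN j 0 * lN j 2)) = 0 := by
    rw [Fin.sum_univ_six]
    linear_combination (1/12 : ℝ) * EV 1 0 0 + (1/12 : ℝ) * EV 0 1 0 + (1/12 : ℝ) * EV 0 0 1 + (-1/24 : ℝ) * EV 1 1 0 + (-1/24 : ℝ) * EV 1 (-1) 0 + (-1/12 : ℝ) * EV 1 0 1 + (-1/24 : ℝ) * EV 0 1 1 + (-1/24 : ℝ) * EV 0 1 (-1) + (1/24 : ℝ) * EV 1 1 1 + (1/24 : ℝ) * EV 1 (-1) 1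
  have M15 : ∑ j : Fin 6, lamN j * ((lN j 2)^2 * (lN j 0 * lN j 1)) = 0 := by
    rw [Fin.sum_univ_six]
    linear_combination (1/12 : ℝ) * EV 1 0 0 + (1/12 : ℝ) * EV 0 1 0 + (1/12 : ℝ) * EV 0 0 1 + (-1/12 : ℝ) * EV 1 1 0 + (-1/24 : ℝ) * EV 1 0 1 + (-1/24 : ℝ) * EV 1 0 (-1) + (-1/24 : ℝ) * EV 0 1 1 + (-1/24 : ℝ) * EV 0 1 (-1) + (1/24 : ℝ) * EV 1 1 1 + (1/24 : ℝ) * EV 1 1 (-1)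
  exact keyReal (fun j : Fin 6 => lamN j) (fun j => lN j 0) (fun j => lN j 1) (fun j => lN j 2)
    M1 M2 M3 M4 M5 M6 M7 M8 M9 M10 M11 M12 M13 M14 M15

set_option maxHeartbeats 1000000 in
lemma decomp15 : ∃ (lam : Fin 15 → ℝ) (l : Fin 15 → Fin 3 → ℝ),
    (X 0 ^ 4 + X 1 ^ 4 + X 2 ^ 4 - C 3 * X 0 ^ 2 * X 1 ^ 2
        - C 3 * X 0 ^ 2 * X 2 ^ 2 + X 1 ^ 2 * X 2 ^ 2 : MvPolynomial (Fin 3) ℝ)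
      = ∑ j, MvPolynomial.C (lam j) * (∑ i, MvPolynomial.C (l j i) * MvPolynomial.X i) ^ 4 := by
  refine ⟨![1, 1, 1, -(1/4), -(1/4), 1/2, 1/2, -(1/4), -(1/4), 1/2, 1/2, 1/12, 1/12, -(1/6), -(1/6)],
    ![![1,0,0], ![0,1,0], ![0,0,1], ![1,1,0], ![1,-1,0], ![1,0,0], ![0,1,0],
      ![1,0,1], ![1,0,-1], ![1,0,0], ![0,0,1], ![0,1,1], ![0,1,-1], ![0,1,0], ![0,0,1]], ?_⟩
  apply MvPolynomial.funext
  intro v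
  simp only [map_sum, map_add, map_sub, map_mul, map_pow, eval_C, eval_X, Fin.sum_univ_three,
    Fin.sum_univ_succ, Finset.univ_unique, Finset.sum_singleton, Fin.sum_univ_zero,
    Matrix.cons_val_zero, Matrix.cons_val_one, Matrix.head_cons, Matrix.cons_val_two,
    Matrix.tail_cons, Matrix.cons_val_succ, Matrix.cons_val_fin_one, Fin.default_eq_zero,
    Fin.succ_zero_eq_one, Fin.succ_one_eq_two]
  ring

/-- The ternary quartic `x⁴ + y⁴ + z⁴ − 3x²y² − 3x²z² + y²z²` has real rank at least 7. -/
theorem explicit_quartic_rank_ge_seven :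
    7 ≤ realRank 3 4
      (X 0 ^ 4 + X 1 ^ 4 + X 2 ^ 4 - C 3 * X 0 ^ 2 * X 1 ^ 2
        - C 3 * X 0 ^ 2 * X 2 ^ 2 + X 1 ^ 2 * X 2 ^ 2) := by
  have hall : ∀ k ∈ {k : ℕ | ∃ (lam : Fin k → ℝ) (l : Fin k → Fin 3 → ℝ),
      (X 0 ^ 4 + X 1 ^ 4 + X 2 ^ 4 - C 3 * X 0 ^ 2 * X 1 ^ 2
        - C 3 * X 0 ^ 2 * X 2 ^ 2 + X 1 ^ 2 * X 2 ^ 2 : MvPolynomial (Fin 3) ℝ)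
      = ∑ j, MvPolynomial.C (lam j) * (∑ i, MvPolynomial.C (l j i) * MvPolynomial.X i) ^ 4},
      7 ≤ k := by
    intro k hk
    obtain ⟨lam, l, hf⟩ := hk
    by_contra hlt
    push_neg at hlt
    exact no_small_decomp k (by omega) lam l hf
  have hne : {k : ℕ | ∃ (lam : Fin k → ℝ) (l : Fin k → Fin 3 → ℝ),
      (X 0 ^ 4 + X 1 ^ 4 + X 2 ^ 4 - C 3 * X 0 ^ 2 * X 1 ^ 2
        - C 3 * X 0 ^ 2 * X 2 ^ 2 + X 1 ^ 2 * X 2 ^ 2 : MvPolynomial (Fin 3) ℝ)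
      = ∑ j, MvPolynomial.C (lam j) * (∑ i, MvPolynomial.C (l j i) * MvPolynomial.X i) ^ 4}.Nonempty :=
    ⟨15, decomp15⟩
  exact hall _ (Nat.sInf_mem hne)
end

section
/- For every a ∈ ℝ, the ternary quartic f_a = a(x⁴ + y⁴ + z⁴) + 6(x²y² + x²z² + y²z²) has real rank at most 7: rk(f_a) ≤ 7. -/
open MvPolynomial

/-- The even symmetric ternary quartic `f_a = a(x⁴ + y⁴ + z⁴) + 6(x²y² + x²z² + y²z²)`. -/
noncomputable def fa (a : ℝ) : MvPolynomial (Fin 3) ℝ :=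
  C a * (X 0 ^ 4 + X 1 ^ 4 + X 2 ^ 4)
    + C 6 * (X 0 ^ 2 * X 1 ^ 2 + X 0 ^ 2 * X 2 ^ 2 + X 1 ^ 2 * X 2 ^ 2)

/-- For every real `a`, the quartic `f_a` has real rank at most 7. -/
theorem fa_rank_le_seven (a : ℝ) : realRank 3 4 (fa a) ≤ 7 := by
  apply Nat.sInf_le
  refine ⟨![(1:ℝ)/4, 1/4, 1/4, 1/4, a - 1, a - 1, a - 1],
    ![![1,1,1], ![1,1,-1], ![1,-1,1], ![-1,1,1], ![1,0,0], ![0,1,0], ![0,0,1]], ?_⟩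
  have h : (4 : MvPolynomial (Fin 3) ℝ) * C ((1:ℝ)/4) = 1 := by
    rw [show (4 : MvPolynomial (Fin 3) ℝ) = C 4 from (map_ofNat C 4).symm, ← map_mul]
    norm_num
  simp only [fa, Fin.sum_univ_succ, Fin.sum_univ_zero, Matrix.cons_val_zero,
    Matrix.cons_val_one, Matrix.head_cons, Matrix.cons_val_succ, Matrix.cons_val_two,
    Matrix.tail_cons, map_sub, map_one, map_neg, map_zero, map_ofNat,
    Fin.succ_zero_eq_one, Fin.succ_one_eq_two]
  linear_combination (-(6*(X 0^2*X 1^2 + X 0^2*X 2^2 + X 1^2*X 2^2)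
    + X 0^4 + X 1^4 + X 2^4) : MvPolynomial (Fin 3) ℝ) * h
end

section
/- For every a ∈ ℝ with −3 ≤ a < −1, the ternary quartic f_a = a(x⁴ + y⁴ + z⁴) + 6(x²y² + x²z² + y²z²) has real rank exactly 7: rk(f_a) = 7. -/
/-!
The upper bound is an explicit seven-term decomposition. For the lower bound, pad a shorter
decomposition to `f_a = ∑_{j<6} λⱼ ℓⱼ⁴` and let `V` be the `6 × 6` matrix whose rows evaluate
quadrics at the `ℓⱼ`. Apolarity gives `Vᵀ diag(λ) V = C_a`, the middle catalecticant of `f_a`,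
which is indefinite. If `a ≠ -2`, then `K C_a = (a - 1)(a + 2) • 1` for an explicit `K`, so `V` is
invertible, and testing against `V⁻¹ eⱼ` gives `(a - 1)(a + 2) λⱼ = λⱼ² Vⱼᵀ K Vⱼ`; as a quartic
in `ℓⱼ`, `Vⱼᵀ K Vⱼ` is nonpositive for `-3 ≤ a ≤ -1`. Then `(a - 1)(a + 2) C_a` would be negative
semidefinite. If `a = -2`, the kernel of `C_a` is spanned by `x² + y² + z²`, which forces
`λⱼ ‖ℓⱼ‖² = 0` for every `j`, and hence `C_a = 0`.
-/

open MvPolynomial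

open Matrix

section Waring

variable {n d : ℕ} {f : MvPolynomial (Fin n) ℝ}

def HasWaringDecomp (n d : ℕ) (f : MvPolynomial (Fin n) ℝ) (k : ℕ) : Prop :=
  ∃ (lam : Fin k → ℝ) (l : Fin k → Fin n → ℝ),
    f = ∑ j, MvPolynomial.C (lam j) * (∑ i, MvPolynomial.C (l j i) * MvPolynomial.X i) ^ d

theorem HasWaringDecomp.succ {k : ℕ} (h : HasWaringDecomp n d f k) :
    HasWaringDecomp n d f (k + 1) := by
  obtain ⟨lam, l, rfl⟩ := h
  exact ⟨Fin.snoc lam 0, Fin.snoc l 0, by simp [Fin.sum_univ_castSucc]⟩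

theorem HasWaringDecomp.mono {k m : ℕ} (h : HasWaringDecomp n d f k) (hkm : k ≤ m) :
    HasWaringDecomp n d f m := by
  induction hkm with
  | refl => exact h
  | step _ ih => exact ih.succ

theorem realRank_eq_succ_of_hasWaringDecomp {k : ℕ} (h : HasWaringDecomp n d f (k + 1))
    (h' : ¬ HasWaringDecomp n d f k) : realRank n d f = k + 1 :=
  le_antisymm (Nat.sInf_le h) <| le_csInf ⟨_, h⟩ fun m hm => by
    by_contra! hmk
    exact h' (HasWaringDecomp.mono hm (by omega))

theorem eval_waringSum {k : ℕ} (lam : Fin k → ℝ) (l : Fin k → Fin n → ℝ) (p : Fin n → ℝ) :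
    eval p (∑ j, C (lam j) * (∑ i, C (l j i) * X i) ^ d) = ∑ j, lam j * (l j ⬝ᵥ p) ^ d := by
  simp [map_sum, dotProduct]

end Waring

theorem sum_mul_sq_mul_sq {ι σ : Type*} [Fintype σ] (s : Finset ι) (lam : ι → ℝ)
    (l : ι → σ → ℝ) (u v : σ → ℝ) :
    12 * ∑ j ∈ s, lam j * ((l j ⬝ᵥ u) ^ 2 * (l j ⬝ᵥ v) ^ 2) =
      ∑ j ∈ s, lam j * (l j ⬝ᵥ (u + v)) ^ 4 + ∑ j ∈ s, lam j * (l j ⬝ᵥ (u - v)) ^ 4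
        - 2 * ∑ j ∈ s, lam j * (l j ⬝ᵥ u) ^ 4 - 2 * ∑ j ∈ s, lam j * (l j ⬝ᵥ v) ^ 4 := by
  simp only [Finset.mul_sum, ← Finset.sum_add_distrib, ← Finset.sum_sub_distrib]
  refine Finset.sum_congr rfl fun j _ => ?_
  rw [dotProduct_add, dotProduct_sub]
  ring

namespace Matrix

variable {m n R : Type*} [Fintype m] [Fintype n] [DecidableEq n] [CommRing R]

theorem dotProduct_transpose_diagonal_mul_mulVec (V : Matrix n m R) (lam : n → R)
    (x y : m → R) :
    x ⬝ᵥ (Vᵀ * diagonal lam * V) *ᵥ y = ∑ j, lam j * (V *ᵥ x) j * (V *ᵥ y) j := by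
  rw [← mulVec_mulVec, ← mulVec_mulVec, dotProduct_mulVec, vecMul_transpose]
  simp only [dotProduct, mulVec_diagonal]
  exact Finset.sum_congr rfl fun j _ => by ring

theorem mul_eq_sq_mul_of_mul_eq_smul_one {V K : Matrix n n R} {lam : n → R} {D : R}
    (hV : IsUnit V.det) (hK : K * (Vᵀ * diagonal lam * V) = D • 1) (j : n) :
    D * lam j = lam j ^ 2 * (V j ⬝ᵥ K *ᵥ V j) := by
  obtain ⟨w, hVw⟩ : ∃ w, V *ᵥ w = Pi.single j 1 :=
    ⟨V⁻¹ *ᵥ Pi.single j 1, by rw [mulVec_mulVec, mul_nonsing_inv _ hV, one_mulVec]⟩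
  have hMw : (Vᵀ * diagonal lam * V) *ᵥ w = lam j • V j := by
    rw [← mulVec_mulVec, hVw, ← mulVec_mulVec, diagonal_mulVec_single]
    ext i; simp [mul_comm]
  have hwMw : w ⬝ᵥ (Vᵀ * diagonal lam * V) *ᵥ w = lam j := by
    rw [dotProduct_transpose_diagonal_mul_mulVec, hVw]
    simp [Pi.single_apply]
  calc D * lam j = (Vᵀ * diagonal lam * V) *ᵥ w ⬝ᵥ (K * (Vᵀ * diagonal lam * V)) *ᵥ w := by
        rw [hK, smul_mulVec, one_mulVec, dotProduct_smul, dotProduct_comm, hwMw, smul_eq_mul]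
    _ = lam j ^ 2 * (V j ⬝ᵥ K *ᵥ V j) := by
        rw [← mulVec_mulVec w K, hMw, mulVec_smul, smul_dotProduct, dotProduct_smul]
        simp only [smul_eq_mul]; ring

end Matrix

/-- A quadric `x : Fin 6 → ℝ` stands for `x₀X₀² + x₁X₁² + x₂X₂² + 2x₃X₀X₁ + 2x₄X₀X₂ + 2x₅X₁X₂`,
so that its value at `c` is `quadEval c ⬝ᵥ x`, and `sqQuad u` is the quadric `(u ⬝ᵥ X)²`. -/
def quadEval (c : Fin 3 → ℝ) : Fin 6 → ℝ :=
  ![c 0 ^ 2, c 1 ^ 2, c 2 ^ 2, 2 * c 0 * c 1, 2 * c 0 * c 2, 2 * c 1 * c 2]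

def sqQuad (u : Fin 3 → ℝ) : Fin 6 → ℝ :=
  ![u 0 ^ 2, u 1 ^ 2, u 2 ^ 2, u 0 * u 1, u 0 * u 2, u 1 * u 2]

theorem quadEval_dotProduct_sqQuad (c u : Fin 3 → ℝ) :
    quadEval c ⬝ᵥ sqQuad u = (c ⬝ᵥ u) ^ 2 := by
  simp only [quadEval, sqQuad, dotProduct, Fin.sum_univ_six, Fin.sum_univ_three, cons_val]
  ring

theorem Matrix.ext_sqQuad {A B : Matrix (Fin 6) (Fin 6) ℝ}
    (h : ∀ u v, sqQuad u ⬝ᵥ A *ᵥ sqQuad v = sqQuad u ⬝ᵥ B *ᵥ sqQuad v) : A = B := by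
  let W : Matrix (Fin 6) (Fin 6) ℝ := .of fun i => sqQuad
    (![![1, 0, 0], ![0, 1, 0], ![0, 0, 1], ![1, 1, 0], ![1, 0, 1], ![0, 1, 1]] i)
  have hW : IsUnit W := by
    rw [isUnit_iff_isUnit_det, isUnit_iff_ne_zero]
    simp [W, sqQuad, det_succ_row_zero, Fin.sum_univ_succ]
  have : W * A * Wᵀ = W * B * Wᵀ := by
    ext i k
    rw [mul_mul_apply, mul_mul_apply, transpose_transpose]
    exact h _ _
  exact hW.mul_left_cancel (((isUnit_transpose W).2 hW).mul_right_cancel this)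

def quadEvalMatrix {k : ℕ} (c : Fin k → Fin 3 → ℝ) : Matrix (Fin k) (Fin 6) ℝ :=
  .of fun j => quadEval (c j)

/-- The middle catalecticant of `fa a` in the coordinates of `quadEval`. -/
def faCat (a : ℝ) : Matrix (Fin 6) (Fin 6) ℝ :=
  !![a, 1, 1, 0, 0, 0; 1, a, 1, 0, 0, 0; 1, 1, a, 0, 0, 0;
    0, 0, 0, 4, 0, 0; 0, 0, 0, 0, 4, 0; 0, 0, 0, 0, 0, 4]

noncomputable def faCatAdj (a : ℝ) : Matrix (Fin 6) (Fin 6) ℝ :=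
  !![a + 1, -1, -1, 0, 0, 0; -1, a + 1, -1, 0, 0, 0; -1, -1, a + 1, 0, 0, 0;
    0, 0, 0, (a - 1) * (a + 2) / 4, 0, 0; 0, 0, 0, 0, (a - 1) * (a + 2) / 4, 0;
    0, 0, 0, 0, 0, (a - 1) * (a + 2) / 4]

theorem faCatAdj_mul_faCat (a : ℝ) : faCatAdj a * faCat a = ((a - 1) * (a + 2)) • 1 := by
  ext i j
  fin_cases i <;> fin_cases j <;>
    simp only [faCatAdj, faCat, mul_apply, of_apply, Fin.sum_univ_six, cons_val, Matrix.smul_apply,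
      one_apply, smul_eq_mul, Fin.reduceEq, ↓reduceIte, Fin.zero_eta, Fin.mk_one, Fin.reduceFinMk,
      Fin.isValue] <;>
    ring

theorem eval_fa_polarization (a : ℝ) (u v : Fin 3 → ℝ) :
    eval (u + v) (fa a) + eval (u - v) (fa a) - 2 * eval u (fa a) - 2 * eval v (fa a) =
      12 * (sqQuad u ⬝ᵥ faCat a *ᵥ sqQuad v) := by
  simp only [fa, sqQuad, faCat, dotProduct, mulVec, Fin.sum_univ_six, of_apply, cons_val, eval_add,
    eval_mul, eval_pow, eval_C, eval_X, Pi.add_apply, Pi.sub_apply]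
  ring

theorem gram_quadEvalMatrix_eq_faCat {a : ℝ} {k : ℕ} {lam : Fin k → ℝ} {c : Fin k → Fin 3 → ℝ}
    (h : ∀ p, ∑ j, lam j * (c j ⬝ᵥ p) ^ 4 = eval p (fa a)) :
    (quadEvalMatrix c)ᵀ * diagonal lam * quadEvalMatrix c = faCat a := by
  refine ext_sqQuad fun u v => ?_
  have hV (w : Fin 3 → ℝ) : quadEvalMatrix c *ᵥ sqQuad w = fun j => (c j ⬝ᵥ w) ^ 2 :=
    funext fun j => quadEval_dotProduct_sqQuad (c j) w
  have hpol := sum_mul_sq_mul_sq Finset.univ lam c u v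
  simp only [h, ← mul_assoc] at hpol
  rw [dotProduct_transpose_diagonal_mul_mulVec, hV, hV]
  linarith [eval_fa_polarization a u v]

theorem quadEval_dotProduct_faCatAdj_mulVec_nonpos {a : ℝ} (h₁ : -3 ≤ a) (h₂ : a ≤ -1)
    (c : Fin 3 → ℝ) : quadEval c ⬝ᵥ faCatAdj a *ᵥ quadEval c ≤ 0 := by
  set s4 := c 0 ^ 4 + c 1 ^ 4 + c 2 ^ 4
  set s22 := c 0 ^ 2 * c 1 ^ 2 + c 0 ^ 2 * c 2 ^ 2 + c 1 ^ 2 * c 2 ^ 2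
  have hQ : quadEval c ⬝ᵥ faCatAdj a *ᵥ quadEval c =
      (a + 1) * (s4 - s22) + (a + 3) * (a - 1) * s22 := by
    simp only [s4, s22, quadEval, faCatAdj, dotProduct, mulVec, Fin.sum_univ_six, of_apply, cons_val]
    ring
  have hs22 : 0 ≤ s22 := by positivity
  have hs : s22 ≤ s4 := by
    nlinarith [sq_nonneg (c 0 ^ 2 - c 1 ^ 2), sq_nonneg (c 0 ^ 2 - c 2 ^ 2),
      sq_nonneg (c 1 ^ 2 - c 2 ^ 2)]
  rw [hQ]
  nlinarith [mul_nonneg (mul_nonneg (by linarith : 0 ≤ a + 3) (by linarith : 0 ≤ 1 - a)) hs22]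

theorem quadEval_dotProduct_faCatAdj_neg_two_mulVec (c : Fin 3 → ℝ) :
    quadEval c ⬝ᵥ faCatAdj (-2) *ᵥ quadEval c = -(c ⬝ᵥ c) ^ 2 := by
  simp only [quadEval, faCatAdj, dotProduct, mulVec, Fin.sum_univ_six, Fin.sum_univ_three, of_apply,
    cons_val]
  ring

theorem gram_quadEvalMatrix_ne_faCat_of_ne_neg_two {a : ℝ} (h₁ : -3 ≤ a) (h₂ : a < -1) (ha : a ≠ -2)
    (lam : Fin 6 → ℝ) (c : Fin 6 → Fin 3 → ℝ) :
    (quadEvalMatrix c)ᵀ * diagonal lam * quadEvalMatrix c ≠ faCat a := by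
  intro hM
  set V := quadEvalMatrix c
  set D := (a - 1) * (a + 2)
  have hD : D ≠ 0 := mul_ne_zero (by linarith) fun h => ha (by linarith)
  have hK : faCatAdj a * (Vᵀ * diagonal lam * V) = D • 1 := hM ▸ faCatAdj_mul_faCat a
  have hV : IsUnit V.det := by
    refine isUnit_iff_ne_zero.2 fun hdet => ?_
    obtain ⟨y, hy, hVy⟩ := exists_mulVec_eq_zero_iff.2 hdet
    have : D • y = 0 := by
      rw [← one_mulVec y, ← smul_mulVec, ← hK, ← mulVec_mulVec, ← mulVec_mulVec, hVy]
      simp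
    exact hy ((smul_eq_zero.1 this).resolve_left hD)
  have hsign (j : Fin 6) : D * lam j ≤ 0 := by
    rw [mul_eq_sq_mul_of_mul_eq_smul_one hV hK j]
    exact mul_nonpos_of_nonneg_of_nonpos (sq_nonneg _)
      (quadEval_dotProduct_faCatAdj_mulVec_nonpos h₁ h₂.le _)
  have hsemidef (x : Fin 6 → ℝ) : D * (x ⬝ᵥ faCat a *ᵥ x) ≤ 0 := by
    rw [← hM, dotProduct_transpose_diagonal_mul_mulVec, Finset.mul_sum]
    exact Finset.sum_nonpos fun j _ => by nlinarith [hsign j, mul_self_nonneg ((V *ᵥ x) j)]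
  have h3 : D * 4 ≤ 0 := by
    simpa [faCat, dotProduct, mulVec, Fin.sum_univ_six] using hsemidef ![0, 0, 0, 1, 0, 0]
  have h01 : D * (2 * (a - 1)) ≤ 0 := by
    convert hsemidef ![1, -1, 0, 0, 0, 0] using 2
    simp only [faCat, dotProduct, mulVec, Fin.sum_univ_six, of_apply, cons_val]
    ring
  exact hD (le_antisymm (by linarith) (by nlinarith))

theorem eq_smul_of_faCat_neg_two_mulVec_eq_zero {y : Fin 6 → ℝ} (hy : faCat (-2) *ᵥ y = 0) :
    y = y 0 • ![1, 1, 1, 0, 0, 0] := by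
  simp only [funext_iff, Fin.forall_fin_succ, IsEmpty.forall_iff, and_true, faCat, mulVec,
    dotProduct, Fin.sum_univ_six, of_apply, Fin.reduceSucc, cons_val, Pi.zero_apply] at hy
  obtain ⟨e0, e1, e2, e3, e4, e5⟩ := hy
  ext i
  fin_cases i <;> simp only [Fin.zero_eta, Fin.mk_one, Fin.reduceFinMk, Pi.smul_apply, cons_val,
    smul_eq_mul, mul_one, mul_zero] <;> linarith

theorem gram_quadEvalMatrix_ne_faCat_neg_two (lam : Fin 6 → ℝ) (c : Fin 6 → Fin 3 → ℝ) :
    (quadEvalMatrix c)ᵀ * diagonal lam * quadEvalMatrix c ≠ faCat (-2) := by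
  intro hM
  set V := quadEvalMatrix c
  have hnorm (j : Fin 6) : lam j * (c j ⬝ᵥ c j) = 0 := by
    by_cases hdet : V.det = 0
    · obtain ⟨y, hy, hVy⟩ := exists_mulVec_eq_zero_iff.2 hdet
      have hy' := eq_smul_of_faCat_neg_two_mulVec_eq_zero
        (by rw [← hM, ← mulVec_mulVec, hVy, mulVec_zero])
      have hcc : (c j ⬝ᵥ c j) * y 0 = 0 := by
        have hVj := congrFun hVy j
        rw [hy'] at hVj
        simp only [V, quadEvalMatrix, quadEval, mulVec, dotProduct, Fin.sum_univ_six,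
          Fin.sum_univ_three, of_apply, Pi.smul_apply, cons_val, smul_eq_mul, Pi.zero_apply] at hVj ⊢
        linear_combination hVj
      have hy0 : y 0 ≠ 0 := fun h => hy (by rw [hy', h, zero_smul])
      rw [(mul_eq_zero.1 hcc).resolve_right hy0, mul_zero]
    · have hK : faCatAdj (-2) * (Vᵀ * diagonal lam * V) = ((-2 - 1) * (-2 + 2) : ℝ) • 1 :=
        hM ▸ faCatAdj_mul_faCat (-2)
      have := mul_eq_sq_mul_of_mul_eq_smul_one (isUnit_iff_ne_zero.2 hdet) hK j
      rw [show V j = quadEval (c j) from rfl, quadEval_dotProduct_faCatAdj_neg_two_mulVec] at this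
      exact pow_eq_zero_iff two_ne_zero |>.1 (by linear_combination this)
  have hΛV : diagonal lam * V = 0 := by
    ext j i
    rcases mul_eq_zero.1 (hnorm j) with h | h
    · simp [diagonal_mul, h]
    · have : quadEval 0 = 0 := by ext i; fin_cases i <;> simp [quadEval]
      simp [diagonal_mul, V, quadEvalMatrix, dotProduct_self_eq_zero.1 h, this]
  have h33 := congrFun (congrFun hM 3) 3
  rw [Matrix.mul_assoc, hΛV] at h33
  simp [faCat] at h33

theorem not_hasWaringDecomp_fa_six {a : ℝ} (h₁ : -3 ≤ a) (h₂ : a < -1) :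
    ¬ HasWaringDecomp 3 4 (fa a) 6 := by
  rintro ⟨lam, c, hf⟩
  have hM := gram_quadEvalMatrix_eq_faCat fun p => by rw [hf, eval_waringSum]
  rcases eq_or_ne a (-2) with rfl | ha
  · exact gram_quadEvalMatrix_ne_faCat_neg_two lam c hM
  · exact gram_quadEvalMatrix_ne_faCat_of_ne_neg_two h₁ h₂ ha lam c hM

/-- From `∑ (x ± y ± z)⁴ = 4 (x⁴ + y⁴ + z⁴) + 24 (x²y² + x²z² + y²z²)`. -/
theorem hasWaringDecomp_fa_seven (a : ℝ) : HasWaringDecomp 3 4 (fa a) 7 := by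
  refine ⟨![a - 1, a - 1, a - 1, 1 / 4, 1 / 4, 1 / 4, 1 / 4],
    ![![1, 0, 0], ![0, 1, 0], ![0, 0, 1], ![1, 1, 1], ![1, 1, -1], ![1, -1, 1], ![1, -1, -1]],
    MvPolynomial.funext fun p => ?_⟩
  simp only [fa, eval_add, eval_mul, eval_pow, eval_C, eval_X, Fin.sum_univ_seven,
    Fin.sum_univ_three, cons_val]
  ring

/-- For `−3 ≤ a < −1`, the quartic `f_a` has real rank exactly 7. -/
theorem fa_rank_eq_seven' (a : ℝ) (h₁ : -3 ≤ a) (h₂ : a < -1) :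
    realRank 3 4 (fa a) = 7 :=
  realRank_eq_succ_of_hasWaringDecomp (hasWaringDecomp_fa_seven a) (not_hasWaringDecomp_fa_six h₁ h₂)
end
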